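/- Let A be a commutative ℝ-subalgebra of M_r(ℂ) all of whose elements have only real eigenvalues, and suppose A is generated by commuting matrices that are simultaneously triangularizable with real diagonal entries. Then A is a finite-dimensional ℝ-algebra each of whose maximal ideals has residue field isomorphic to ℝ, so A is a finite product of Weil algebras. -/

import Mathlib

/-- A bundled Weil algebra: a finite-dimensional commutative `ℝ`-algebra with a unique
maximal ideal whose residue field is `ℝ`. -/
structure WeilAlgebra where
  carrier : Type
  [commRing : CommRing carrier]
  [algebra : Algebra ℝ carrier]
  finiteDimensional : FiniteDimensional ℝ carrier
  isWeil : ∃ m : Ideal carrier, m.IsMaximal ∧ (∀ I : Ideal carrier, I.IsMaximal → I = m) ∧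
    Nonempty ((carrier ⧸ m) ≃ₐ[ℝ] ℝ)

attribute [instance] WeilAlgebra.commRing WeilAlgebra.algebra

/-!
Conjugating by `P`, every element of `A` becomes upper triangular with real diagonal, so each
diagonal entry is an `ℝ`-algebra character `A → ℝ`. An element killed by all characters is
strictly upper triangular, hence nilpotent; so every prime ideal contains, and by maximality
equals, the kernel of a character, and all residue fields are `ℝ`. Being finite-dimensional, `A`
is Artinian, hence the product of its localizations at its finitely many maximal ideals, and each
of these is a local finite-dimensional algebra whose character exhibits its residue field as `ℝ`.
-/

namespace Matrix

variable {n R : Type*} [Fintype n] [LinearOrder n]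

theorem IsUpperTriangular.mul_apply_self [Semiring R] {M N : Matrix n n R}
    (hM : M.IsUpperTriangular) (hN : N.IsUpperTriangular) (i : n) :
    (M * N) i i = M i i * N i i := by
  rw [mul_apply]
  refine Finset.sum_eq_single i (fun j _ hj => ?_) (by simp)
  rcases hj.lt_or_gt with hji | hij
  · rw [hM hji, zero_mul]
  · rw [hN hij, mul_zero]

theorem IsUpperTriangular.isNilpotent [CommRing R] {M : Matrix n n R}
    (hM : M.IsUpperTriangular) (hdiag : ∀ i, M i i = 0) : IsNilpotent M := by
  refine ⟨Fintype.card n, ?_⟩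
  simpa [charpoly_of_isUpperTriangular M hM, hdiag] using M.aeval_self_charpoly

variable {S A : Type*} [CommSemiring R] [Semiring S] [Algebra R S] [Semiring A] [Algebra R A]

@[simps]
def upperTriangularDiagEntryAlgHom (T : A →ₐ[R] Matrix n n S)
    (hT : ∀ a, (T a).IsUpperTriangular) (i : n) : A →ₐ[R] S where
  toFun a := T a i i
  map_one' := by simp
  map_mul' a b := by simp [(hT a).mul_apply_self (hT b)]
  map_zero' := by simp
  map_add' a b := by simp
  commutes' r := by simp [algebraMap_matrix_apply]

end Matrix

@[simps]
noncomputable def AlgHom.complexRe {A : Type*} [Semiring A] [Algebra ℝ A] (f : A →ₐ[ℝ] ℂ)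
    (hf : ∀ a, (f a).im = 0) : A →ₐ[ℝ] ℝ where
  toFun a := (f a).re
  map_one' := by simp
  map_mul' a b := by simp [Complex.mul_re, hf]
  map_zero' := by simp
  map_add' a b := by simp
  commutes' r := by simp

theorem AlgHom.surjective_to_base {R A : Type*} [CommSemiring R] [Semiring A] [Algebra R A]
    (φ : A →ₐ[R] R) : Function.Surjective φ :=
  fun c => ⟨algebraMap R A c, φ.commutes c⟩

theorem Ideal.IsPrime.exists_ker_eq_of_forall_isNilpotent {K A ι : Type*} [Field K]
    [CommRing A] [Algebra K A] [Fintype ι] {P : Ideal A} (hP : P.IsPrime) (φ : ι → A →ₐ[K] K)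
    (hnil : ∀ a, (∀ i, φ i a = 0) → IsNilpotent a) :
    ∃ i, RingHom.ker (φ i) = P := by
  have hle : Finset.univ.inf (fun i => RingHom.ker (φ i)) ≤ P := fun a ha =>
    nilradical_le_prime P <| hnil a fun i =>
      Finset.inf_le (f := fun i => RingHom.ker (φ i)) (Finset.mem_univ i) ha
  obtain ⟨i, -, hi⟩ := hP.inf_le'.mp hle
  exact ⟨i, (RingHom.ker_isMaximal_of_surjective _ (φ i).surjective_to_base).eq_of_le hP.ne_top hi⟩

def WeilAlgebra.ofIsLocalRing (B : Type) [CommRing B] [Algebra ℝ B] [FiniteDimensional ℝ B]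
    [IsLocalRing B] (φ : B →ₐ[ℝ] ℝ) : WeilAlgebra where
  carrier := B
  finiteDimensional := inferInstance
  isWeil :=
    have hmax := RingHom.ker_isMaximal_of_surjective _ φ.surjective_to_base
    ⟨RingHom.ker φ, hmax, fun _ hI => (IsLocalRing.eq_maximalIdeal hI).trans
      (IsLocalRing.eq_maximalIdeal hmax).symm,
      ⟨Ideal.quotientKerAlgEquivOfSurjective φ.surjective_to_base⟩⟩

noncomputable def WeilAlgebra.localizationAtPrime {A : Type} [CommRing A] [Algebra ℝ A]
    [FiniteDimensional ℝ A] (p : Ideal A) [p.IsPrime] (φ : A →ₐ[ℝ] ℝ)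
    (hφ : RingHom.ker φ = p) : WeilAlgebra :=
  have : IsArtinianRing A := IsArtinianRing.of_finite ℝ A
  have : FiniteDimensional ℝ (Localization.AtPrime p) := .of_surjective
    (IsScalarTower.toAlgHom ℝ A _).toLinearMap
    (IsArtinianRing.localization_surjective p.primeCompl _)
  .ofIsLocalRing (Localization.AtPrime p) <| IsLocalization.liftAlgHom (M := p.primeCompl)
    (f := φ) fun y => isUnit_iff_ne_zero.mpr fun h => y.2 (hφ ▸ h)

theorem exists_algEquiv_pi_weilAlgebra (A : Type) [CommRing A] [Algebra ℝ A]
    [FiniteDimensional ℝ A]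
    (hker : ∀ I : Ideal A, I.IsMaximal → ∃ φ : A →ₐ[ℝ] ℝ, RingHom.ker φ = I) :
    ∃ (n : ℕ) (W : Fin n → WeilAlgebra), Nonempty (A ≃ₐ[ℝ] ((i : Fin n) → (W i).carrier)) := by
  have : IsArtinianRing A := IsArtinianRing.of_finite ℝ A
  choose φ hφ using fun m : MaximalSpectrum A => hker m.asIdeal m.isMaximal
  let e := (Finite.equivFin (MaximalSpectrum A)).symm
  exact ⟨_, fun i => .localizationAtPrime (e i).asIdeal (φ (e i)) (hφ (e i)),
    ⟨((MaximalSpectrum.toPiLocalizationEquiv A).restrictScalars ℝ).trans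
      (AlgEquiv.piCongrLeft ℝ _ e).symm⟩⟩

theorem commutative_real_matrix_subalgebra_prod_weil_general
    (r : ℕ) (A : Type) [CommRing A] [Algebra ℝ A]
    (ι : A →ₐ[ℝ] Matrix (Fin r) (Fin r) ℂ) (hι : Function.Injective ι)
    (htri : ∃ P : Matrix (Fin r) (Fin r) ℂ, IsUnit P ∧
      ∀ a : A, (P⁻¹ * ι a * P).BlockTriangular id ∧ ∀ i : Fin r, ((P⁻¹ * ι a * P) i i).im = 0) :
    FiniteDimensional ℝ A ∧
    (∀ I : Ideal A, I.IsMaximal → Nonempty ((A ⧸ I) ≃ₐ[ℝ] ℝ)) ∧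
    ∃ (n : ℕ) (W : Fin n → WeilAlgebra),
      Nonempty (A ≃ₐ[ℝ] ((i : Fin n) → (W i).carrier)) := by
  obtain ⟨P, hP, hPtri⟩ := htri
  let conj :=
    MulSemiringAction.toAlgEquiv ℝ (Matrix (Fin r) (Fin r) ℂ) (ConjAct.toConjAct hP.unit⁻¹)
  let T := conj.toAlgHom.comp ι
  have hT (a : A) : T a = P⁻¹ * ι a * P := by
    simp [T, conj, ConjAct.units_smul_def]
  have hTinj : Function.Injective T := conj.injective.comp hι
  simp only [← hT] at hPtri
  let φ (i : Fin r) : A →ₐ[ℝ] ℝ :=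
    (Matrix.upperTriangularDiagEntryAlgHom T (fun a => (hPtri a).1) i).complexRe
      fun a => (hPtri a).2 i
  have hnil (a : A) (ha : ∀ i, φ i a = 0) : IsNilpotent a :=
    (IsNilpotent.map_iff hTinj).mp <| Matrix.IsUpperTriangular.isNilpotent (hPtri a).1 fun i =>
      Complex.ext (ha i) ((hPtri a).2 i)
  have hker (I : Ideal A) (hI : I.IsMaximal) : ∃ ψ : A →ₐ[ℝ] ℝ, RingHom.ker ψ = I :=
    let ⟨i, hi⟩ := hI.isPrime.exists_ker_eq_of_forall_isNilpotent φ hnil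
    ⟨φ i, hi⟩
  have hfin : FiniteDimensional ℝ A := .of_injective ι.toLinearMap hι
  refine ⟨hfin, fun I hI => ?_, exists_algEquiv_pi_weilAlgebra A hker⟩
  obtain ⟨ψ, rfl⟩ := hker I hI
  exact ⟨Ideal.quotientKerAlgEquivOfSurjective ψ.surjective_to_base⟩

theorem commutative_real_matrix_subalgebra_prod_weil
    (r : ℕ) (A : Type) [CommRing A] [Algebra ℝ A]
    (ι : A →ₐ[ℝ] Matrix (Fin r) (Fin r) ℂ) (hι : Function.Injective ι)
    (hreal : ∀ a : A, ∀ z ∈ spectrum ℂ (ι a), z.im = 0)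
    (htri : ∃ P : Matrix (Fin r) (Fin r) ℂ, IsUnit P ∧
      ∀ a : A, (P⁻¹ * ι a * P).BlockTriangular id ∧ ∀ i : Fin r, ((P⁻¹ * ι a * P) i i).im = 0) :
    FiniteDimensional ℝ A ∧
    (∀ I : Ideal A, I.IsMaximal → Nonempty ((A ⧸ I) ≃ₐ[ℝ] ℝ)) ∧
    ∃ (n : ℕ) (W : Fin n → WeilAlgebra),
      Nonempty (A ≃ₐ[ℝ] ((i : Fin n) → (W i).carrier)) :=
  commutative_real_matrix_subalgebra_prod_weil_general r A ι hι htri
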